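/- For coprime integers n, m > 1, n2(Z_{nm}²) ≤ min(n2(Z_n²), n2(Z_m²)), where n2(Z_k²) denotes the minimum cardinality of a complete cap in Z_k². -/
import Mathlib

def IsLine (k : ℕ) (L : Set (ZMod k × ZMod k)) : Prop :=
  ∃ a b t1 t2 : ZMod k, L = {p | ∃ w : ZMod k, p = (a + w * t1, b + w * t2)}

def Collin (k : ℕ) (p q r : ZMod k × ZMod k) : Prop :=
  ∃ L : Set (ZMod k × ZMod k), IsLine k L ∧ p ∈ L ∧ q ∈ L ∧ r ∈ L

def IsCap (k : ℕ) (C : Set (ZMod k × ZMod k)) : Prop :=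
  ∀ p ∈ C, ∀ q ∈ C, ∀ r ∈ C, p ≠ q → p ≠ r → q ≠ r → ¬ Collin k p q r

def IsCompleteCap (k : ℕ) (C : Set (ZMod k × ZMod k)) : Prop :=
  IsCap k C ∧ ∀ P : ZMod k × ZMod k, P ∉ C → ¬ IsCap k (C ∪ {P})

noncomputable def minCompleteCap (k : ℕ) : ℕ :=
  sInf {s | ∃ C : Set (ZMod k × ZMod k), IsCompleteCap k C ∧ C.ncard = s}

lemma line_through (k : ℕ) (a c : ZMod k × ZMod k) :
    ∃ L, IsLine k L ∧ a ∈ L ∧ c ∈ L := by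
  refine ⟨{p | ∃ w : ZMod k, p = (a.1 + w * (c.1 - a.1), a.2 + w * (c.2 - a.2))},
    ⟨a.1, a.2, c.1 - a.1, c.2 - a.2, rfl⟩, ⟨0, ?_⟩, ⟨1, ?_⟩⟩
  · simp
  · refine Prod.ext ?_ ?_ <;> simp <;> ring

lemma collin_degen (k : ℕ) (p q r : ZMod k × ZMod k)
    (h : p = q ∨ p = r ∨ q = r) : Collin k p q r := by
  rcases h with rfl | rfl | rfl
  · obtain ⟨L, hL, h1, h2⟩ := line_through k p r
    exact ⟨L, hL, h1, h1, h2⟩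
  · obtain ⟨L, hL, h1, h2⟩ := line_through k p q
    exact ⟨L, hL, h1, h2, h1⟩
  · obtain ⟨L, hL, h1, h2⟩ := line_through k p q
    exact ⟨L, hL, h1, h2, h2⟩

lemma collin_proj₁ {K k k' : ℕ} (e : ZMod K ≃+* ZMod k × ZMod k')
    {p q r : ZMod K × ZMod K} (h : Collin K p q r) :
    Collin k ((e p.1).1, (e p.2).1) ((e q.1).1, (e q.2).1) ((e r.1).1, (e r.2).1) := by
  obtain ⟨L, ⟨a, b, t1, t2, rfl⟩, ⟨wp, hp⟩, ⟨wq, hq⟩, ⟨wr, hr⟩⟩ := h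
  refine ⟨_, ⟨(e a).1, (e b).1, (e t1).1, (e t2).1, rfl⟩,
    ⟨(e wp).1, ?_⟩, ⟨(e wq).1, ?_⟩, ⟨(e wr).1, ?_⟩⟩
  · rw [hp]; simp
  · rw [hq]; simp
  · rw [hr]; simp

lemma point_lift {K k k' : ℕ} (e : ZMod K ≃+* ZMod k × ZMod k')
    (x : ZMod K) (u v : ZMod k) (u' v' : ZMod k') (w : ZMod k) (w' : ZMod k')
    (h1 : (e x).1 = u + w * v) (h2 : (e x).2 = u' + w' * v') :
    x = e.symm (u, u') + e.symm (w, w') * e.symm (v, v') := by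
  apply e.injective
  rw [map_add, map_mul, e.apply_symm_apply, e.apply_symm_apply, e.apply_symm_apply]
  refine Prod.ext ?_ ?_
  · simpa using h1
  · simpa using h2

lemma collin_lift {K k k' : ℕ} (e : ZMod K ≃+* ZMod k × ZMod k')
    {p q r : ZMod K × ZMod K}
    (h1 : Collin k ((e p.1).1, (e p.2).1) ((e q.1).1, (e q.2).1) ((e r.1).1, (e r.2).1))
    (h2 : Collin k' ((e p.1).2, (e p.2).2) ((e q.1).2, (e q.2).2) ((e r.1).2, (e r.2).2)) :
    Collin K p q r := by
  obtain ⟨L, ⟨a, b, t1, t2, rfl⟩, ⟨wp, hp⟩, ⟨wq, hq⟩, ⟨wr, hr⟩⟩ := h1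
  obtain ⟨L', ⟨a', b', t1', t2', rfl⟩, ⟨wp', hp'⟩, ⟨wq', hq'⟩, ⟨wr', hr'⟩⟩ := h2
  simp only [Prod.mk.injEq] at hp hq hr hp' hq' hr'
  refine ⟨_, ⟨e.symm (a, a'), e.symm (b, b'), e.symm (t1, t1'), e.symm (t2, t2'), rfl⟩,
    ⟨e.symm (wp, wp'), ?_⟩, ⟨e.symm (wq, wq'), ?_⟩, ⟨e.symm (wr, wr'), ?_⟩⟩
  · exact Prod.ext (point_lift e p.1 a t1 a' t1' wp wp' hp.1 hp'.1)
      (point_lift e p.2 b t2 b' t2' wp wp' hp.2 hp'.2)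
  · exact Prod.ext (point_lift e q.1 a t1 a' t1' wq wq' hq.1 hq'.1)
      (point_lift e q.2 b t2 b' t2' wq wq' hq.2 hq'.2)
  · exact Prod.ext (point_lift e r.1 a t1 a' t1' wr wr' hr.1 hr'.1)
      (point_lift e r.2 b t2 b' t2' wr wr' hr.2 hr'.2)

lemma exists_completeCap (k : ℕ) [NeZero k] : ∃ C, IsCompleteCap k C := by
  classical
  set T := {s : ℕ | ∃ C : Set (ZMod k × ZMod k), IsCap k C ∧ C.ncard = s} with hT
  have h0 : 0 ∈ T := ⟨∅, fun p hp => absurd hp (Set.notMem_empty p), Set.ncard_empty _⟩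
  have hbdd : BddAbove T := by
    refine ⟨Nat.card (ZMod k × ZMod k), ?_⟩
    rintro s ⟨C, _, rfl⟩
    calc C.ncard ≤ (Set.univ : Set (ZMod k × ZMod k)).ncard :=
          Set.ncard_le_ncard (Set.subset_univ C) Set.finite_univ
      _ = Nat.card (ZMod k × ZMod k) := Set.ncard_univ _
  obtain ⟨C, hC, hCs⟩ := Nat.sSup_mem ⟨0, h0⟩ hbdd
  refine ⟨C, hC, fun P hP hcap => ?_⟩
  have hmem : (C ∪ {P}).ncard ∈ T := ⟨_, hcap, rfl⟩
  have hle := le_csSup hbdd hmem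
  rw [Set.union_singleton, Set.ncard_insert_of_notMem hP (Set.toFinite C)] at hle
  omega

lemma cap_two_points (k : ℕ) (hk : 1 < k) {C : Set (ZMod k × ZMod k)}
    (hC : IsCompleteCap k C) : ∃ c ∈ C, ∃ c' ∈ C, c ≠ c' := by
  haveI : Fact (1 < k) := ⟨hk⟩
  by_contra hcon
  push_neg at hcon
  rcases Set.eq_empty_or_nonempty C with rfl | ⟨c, hc⟩
  · refine hC.2 (0, 0) (Set.notMem_empty _) ?_
    intro p hp q hq r hr hpq hpr hqr
    simp only [Set.empty_union, Set.mem_singleton_iff] at hp hq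
    exact absurd (hp.trans hq.symm) hpq
  · have hPne : ((c.1 + 1, c.2) : ZMod k × ZMod k) ≠ c := by
      intro h
      have h1 : c.1 + 1 = c.1 := congrArg Prod.fst h
      have : (1 : ZMod k) = 0 := by
        have := congrArg (fun t => t - c.1) h1
        simpa using this
      exact one_ne_zero this
    have hPC : ((c.1 + 1, c.2) : ZMod k × ZMod k) ∉ C := fun h => hPne (hcon _ h c hc)
    refine hC.2 _ hPC ?_
    have key : ∀ x ∈ C ∪ {((c.1 + 1, c.2) : ZMod k × ZMod k)},
        x = c ∨ x = (c.1 + 1, c.2) := by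
      rintro x (hx | hx)
      · exact Or.inl (hcon x hx c hc)
      · exact Or.inr hx
    intro p hp q hq r hr hpq hpr hqr
    rcases key p hp with rfl | rfl <;> rcases key q hq with rfl | rfl <;>
      rcases key r hr with rfl | rfl <;>
      first
      | exact absurd rfl hpq
      | exact absurd rfl hpr
      | exact absurd rfl hqr

lemma key_le (K k k' : ℕ) (hk : 1 < k) [NeZero k'] [NeZero K]
    (e : ZMod K ≃+* ZMod k × ZMod k') :
    minCompleteCap K ≤ minCompleteCap k := by
  haveI : NeZero k := ⟨by omega⟩
  obtain ⟨C0, hC0⟩ := exists_completeCap k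
  have hne : {s | ∃ C : Set (ZMod k × ZMod k), IsCompleteCap k C ∧ C.ncard = s}.Nonempty :=
    ⟨C0.ncard, C0, hC0, rfl⟩
  obtain ⟨D, hD, hDcard⟩ := Nat.sInf_mem hne
  set ψ : ZMod k × ZMod k → ZMod K × ZMod K :=
    fun c => (e.symm (c.1, 0), e.symm (c.2, 0)) with hψdef
  have hFψ : ∀ c : ZMod k × ZMod k, ((e (ψ c).1).1, (e (ψ c).2).1) = c := by
    intro c; simp [hψdef]
  have hGψ : ∀ c : ZMod k × ZMod k,
      ((e (ψ c).1).2, (e (ψ c).2).2) = ((0 : ZMod k'), (0 : ZMod k')) := by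
    intro c; simp [hψdef]
  have ψinj : Function.Injective ψ := fun c c' h => by
    rw [← hFψ c, ← hFψ c', h]
  have hψeq : ∀ (c : ZMod k × ZMod k) (P : ZMod K × ZMod K),
      ψ c = P → c = ((e P.1).1, (e P.2).1) := by
    intro c P h
    rw [← hFψ c, h]
  have capD' : IsCap K (ψ '' D) := by
    rintro p ⟨cp, hcp, rfl⟩ q ⟨cq, hcq, rfl⟩ r ⟨cr, hcr, rfl⟩ hpq hpr hqr hcol
    have h1 := collin_proj₁ e hcol
    rw [hFψ cp, hFψ cq, hFψ cr] at h1
    exact hD.1 cp hcp cq hcq cr hcr (fun h => hpq (by rw [h])) (fun h => hpr (by rw [h]))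
      (fun h => hqr (by rw [h])) h1
  have compD' : IsCompleteCap K (ψ '' D) := by
    refine ⟨capD', fun P hP hcap => ?_⟩
    by_cases hFp : ((e P.1).1, (e P.2).1) ∈ D
    · -- case: projection of P is in D; then its k'-part is nonzero
      have hGp : ((e P.1).2, (e P.2).2) ≠ ((0 : ZMod k'), (0 : ZMod k')) := by
        intro h
        simp only [Prod.mk.injEq] at h
        apply hP
        refine ⟨((e P.1).1, (e P.2).1), hFp, ?_⟩
        refine Prod.ext ?_ ?_
        · show e.symm ((e P.1).1, 0) = P.1
          rw [← h.1]
          exact e.symm_apply_apply P.1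
        · show e.symm ((e P.2).1, 0) = P.2
          rw [← h.2]
          exact e.symm_apply_apply P.2
      obtain ⟨c1, hc1, c2, hc2, h12⟩ := cap_two_points k hk hD
      obtain ⟨c', hc', hcne⟩ : ∃ c' ∈ D, c' ≠ ((e P.1).1, (e P.2).1) := by
        by_cases h1 : c1 = ((e P.1).1, (e P.2).1)
        · exact ⟨c2, hc2, by rw [← h1]; exact h12.symm⟩
        · exact ⟨c1, hc1, h1⟩
      refine hcap P (Or.inr rfl) (ψ ((e P.1).1, (e P.2).1)) (Or.inl ⟨_, hFp, rfl⟩)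
        (ψ c') (Or.inl ⟨c', hc', rfl⟩) ?_ ?_ ?_ ?_
      · intro h
        apply hGp
        rw [show ((e P.1).2, (e P.2).2) =
            ((e (ψ ((e P.1).1, (e P.2).1)).1).2, (e (ψ ((e P.1).1, (e P.2).1)).2).2) by rw [← h],
          hGψ]
      · intro h
        exact hcne ((hψeq c' P h.symm))
      · intro h
        exact hcne (ψinj h).symm
      · refine collin_lift e ?_ ?_
        · rw [hFψ, hFψ]
          exact collin_degen _ _ _ _ (Or.inl rfl)
        · rw [hGψ, hGψ]
          exact collin_degen _ _ _ _ (Or.inr (Or.inr rfl))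
    · -- case: projection of P not in D: contradict completeness of D
      apply hD.2 _ hFp
      intro x hx y hy z hz hxy hxz hyz hcol
      have memx : ∀ c ∈ D, ψ c ∈ ψ '' D ∪ {P} := fun c hc => Or.inl ⟨c, hc, rfl⟩
      have memP : P ∈ ψ '' D ∪ {P} := Or.inr rfl
      have hne : ∀ c ∈ D, ψ c ≠ P := by
        intro c hc h
        exact hFp (hψeq c P h ▸ hc)
      rcases hx with hx | hx <;> rcases hy with hy | hy <;> rcases hz with hz | hz
      · exact hD.1 x hx y hy z hz hxy hxz hyz hcol
      · -- z = Fp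
        rw [Set.mem_singleton_iff] at hz; subst hz
        refine hcap (ψ x) (memx x hx) (ψ y) (memx y hy) P memP
          (fun h => hxy (ψinj h)) (hne x hx) (hne y hy) (collin_lift e ?_ ?_)
        · rw [hFψ, hFψ]; exact hcol
        · rw [hGψ, hGψ]; exact collin_degen _ _ _ _ (Or.inl rfl)
      · -- y = Fp
        rw [Set.mem_singleton_iff] at hy; subst hy
        refine hcap (ψ x) (memx x hx) P memP (ψ z) (memx z hz)
          (hne x hx) (fun h => hxz (ψinj h)) (fun h => (hne z hz) h.symm) (collin_lift e ?_ ?_)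
        · rw [hFψ, hFψ]; exact hcol
        · rw [hGψ, hGψ]; exact collin_degen _ _ _ _ (Or.inr (Or.inl rfl))
      · rw [Set.mem_singleton_iff] at hy hz
        exact absurd (hy.trans hz.symm) hyz
      · -- x = Fp
        rw [Set.mem_singleton_iff] at hx; subst hx
        refine hcap P memP (ψ y) (memx y hy) (ψ z) (memx z hz)
          (fun h => (hne y hy) h.symm) (fun h => (hne z hz) h.symm)
          (fun h => hyz (ψinj h)) (collin_lift e ?_ ?_)
        · rw [hFψ, hFψ]; exact hcol
        · rw [hGψ, hGψ]; exact collin_degen _ _ _ _ (Or.inr (Or.inr rfl))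
      · rw [Set.mem_singleton_iff] at hx hz
        exact absurd (hx.trans hz.symm) hxz
      · rw [Set.mem_singleton_iff] at hx hy
        exact absurd (hx.trans hy.symm) hxy
      · rw [Set.mem_singleton_iff] at hx hy
        exact absurd (hx.trans hy.symm) hxy
  calc minCompleteCap K ≤ (ψ '' D).ncard := Nat.sInf_le ⟨ψ '' D, compD', rfl⟩
    _ = D.ncard := Set.ncard_image_of_injective D ψinj
    _ = minCompleteCap k := hDcard

theorem stmt11 (n m : ℕ) (hn : 1 < n) (hm : 1 < m) (hnm : Nat.Coprime n m) :
    minCompleteCap (n * m) ≤ min (minCompleteCap n) (minCompleteCap m) := by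
  haveI : NeZero n := ⟨by omega⟩
  haveI : NeZero m := ⟨by omega⟩
  haveI : NeZero (n * m) := ⟨Nat.mul_ne_zero (by omega) (by omega)⟩
  refine le_min ?_ ?_
  · exact key_le (n * m) n m hn (ZMod.chineseRemainder hnm)
  · exact key_le (n * m) m n hm ((ZMod.chineseRemainder hnm).trans (RingEquiv.prodComm))
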